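/- Let x, y, z be binary relations on a type A. If x is injective, y is a point, and z is an injective vector, then the relation obtained by swapping the values of x at indices y and z, namely (x[y↦x[z]])[z↦x[y]], is injective. Here the inner array reads x[z] = xᵀ∘z and x[y] = xᵀ∘y are taken in the original relation x. -/

import Mathlib

variable {A : Type*}

/-- Relational composition. -/
def rcomp (r s : A → A → Prop) : A → A → Prop := fun a c => ∃ b, r a b ∧ s b c

/-- Relational converse (transposition). -/
def rconv (r : A → A → Prop) : A → A → Prop := fun a b => r b a

/-- The identity relation. -/
def rid : A → A → Prop := fun a b => a = b

/-- Reflexive-transitive closure. -/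
def rstar (r : A → A → Prop) : A → A → Prop := Relation.ReflTransGen r

/-- Transitive closure. -/
def rplus (r : A → A → Prop) : A → A → Prop := Relation.TransGen r

def RUnivalent (r : A → A → Prop) : Prop := rcomp (rconv r) r ≤ rid

def RInjective (r : A → A → Prop) : Prop := rcomp r (rconv r) ≤ rid

def RTotal (r : A → A → Prop) : Prop := rid ≤ rcomp r (rconv r)

def RSurjective (r : A → A → Prop) : Prop := rid ≤ rcomp (rconv r) r

def RMapping (r : A → A → Prop) : Prop := RUnivalent r ∧ RTotal r

def RVector (r : A → A → Prop) : Prop := rcomp r ⊤ = r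

def RPoint (r : A → A → Prop) : Prop := RVector r ∧ RInjective r ∧ RSurjective r

def RAcyclic (r : A → A → Prop) : Prop := rplus r ≤ ridᶜ

def RForest (p : A → A → Prop) : Prop := RMapping p ∧ RAcyclic (p ⊓ ridᶜ)

def RArc (r : A → A → Prop) : Prop := RPoint (rcomp r ⊤) ∧ RPoint (rcomp (rconv r) ⊤)

/-- Array write x[y↦z] = (y ⊓ zᵀ) ⊔ (yᶜ ⊓ x). -/
def rwrite (x y z : A → A → Prop) : A → A → Prop := (y ⊓ rconv z) ⊔ (yᶜ ⊓ x)

/-- Array read x[y] = xᵀ∘y. -/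
def rread (x y : A → A → Prop) : A → A → Prop := rcomp (rconv x) y

/-- Weakly-connected components: wcc(x) = (x ⊔ xᵀ)^*. -/
def wcc (x : A → A → Prop) : A → A → Prop := rstar (x ⊔ rconv x)

/-- Forest components: fc(x) = x^* ∘ (xᵀ)^*. -/
def fc (x : A → A → Prop) : A → A → Prop := rcomp (rstar x) (rstar (rconv x))

/-- The vector of roots of the forest p: roots(p) = (p ⊓ 1)∘⊤. -/
def rroots (p : A → A → Prop) : A → A → Prop := rcomp (p ⊓ rid) ⊤

/-- The root of x in p: root(p,x) = ((pᵀ)^*∘x) ⊓ roots(p). -/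
def rroot (p x : A → A → Prop) : A → A → Prop := rcomp (rstar (rconv p)) x ⊓ rroots p

/-!
Writing into a relation at a vector row a value read from the relation itself commutes with
composition on the right (`rwrite_rcomp_rread`). Hence the swap of `x` is `rswap y z ∘ x`,
where `rswap y z` is the same swap performed on the identity relation. For injective vectors
`y` and `z` this is a partial permutation of the indices, so it is injective, and injectivity
is preserved by composition.
-/

def rswap (y z : A → A → Prop) : A → A → Prop := rwrite (rwrite rid y z) z y

theorem rid_rcomp (r : A → A → Prop) : rcomp rid r = r := by
  funext a c
  simp [rcomp, rid]

theorem RVector.apply_of_apply {v : A → A → Prop} (hv : RVector v) {a b : A} (h : v a b)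
    (c : A) : v a c := by
  rw [← hv]
  exact ⟨b, h, trivial⟩

theorem RVector.apply_iff {v : A → A → Prop} (hv : RVector v) (a b c : A) : v a b ↔ v a c :=
  ⟨fun h => hv.apply_of_apply h c, fun h => hv.apply_of_apply h b⟩

theorem RVector.eq_of_injective {v : A → A → Prop} (hv : RVector v) (hi : RInjective v)
    {a a' b b' : A} (h : v a b) (h' : v a' b') : a = a' :=
  hi a a' ⟨b, h, hv.apply_of_apply h' b⟩

theorem RInjective.rcomp {r s : A → A → Prop} (hr : RInjective r) (hs : RInjective s) :
    RInjective (rcomp r s) := by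
  rintro a a' ⟨c, ⟨b, hab, hbc⟩, b', ha'b', hb'c⟩
  obtain rfl : b = b' := hs b b' ⟨c, hbc, hb'c⟩
  exact hr a a' ⟨b, hab, ha'b'⟩

theorem rwrite_rcomp_rread {p x v u : A → A → Prop} (hv : RVector v) :
    rwrite (rcomp p x) v (rread x u) = rcomp (rwrite p v u) x := by
  funext a c
  simp only [rwrite, rread, rcomp, rconv, Pi.inf_apply, Pi.sup_apply, Pi.compl_apply,
    inf_Prop_eq, sup_Prop_eq, compl_iff_not, eq_iff_iff, hv.apply_iff a _ c]
  grind

theorem rwrite_rwrite_rread_eq_rswap_rcomp {x y z : A → A → Prop} (hy : RVector y)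
    (hz : RVector z) :
    rwrite (rwrite x y (rread x z)) z (rread x y) = rcomp (rswap y z) x := by
  rw [rswap, ← rwrite_rcomp_rread hz, ← rwrite_rcomp_rread hy, rid_rcomp]

theorem RInjective.rswap {y z : A → A → Prop} (hyi : RInjective y) (hyv : RVector y)
    (hzi : RInjective z) (hzv : RVector z) : RInjective (rswap y z) := by
  rintro a b ⟨c, hac, hbc⟩
  have hy : ∀ {a a'}, y a c → y a' c → a = a' := hyv.eq_of_injective hyi
  have hz : ∀ {a a'}, z a c → z a' c → a = a' := hzv.eq_of_injective hzi
  simp only [_root_.rswap, rwrite, rid, rconv, Pi.inf_apply, Pi.sup_apply, Pi.compl_apply,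
    inf_Prop_eq, sup_Prop_eq, compl_iff_not, hyv.apply_iff _ _ c, hzv.apply_iff _ _ c] at hac hbc
  grind [rid]

theorem update_injective_swap {A : Type*} (x y z : A → A → Prop)
    (hx : RInjective x) (hy : RPoint y) (hz1 : RInjective z) (hz2 : RVector z) :
    RInjective (rwrite (rwrite x y (rread x z)) z (rread x y)) := by
  obtain ⟨hyv, hyi, -⟩ := hy
  rw [rwrite_rwrite_rread_eq_rswap_rcomp hyv hz2]
  exact (hyi.rswap hyv hz1 hz2).rcomp hx
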